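/- arXiv:0909.1033 — 3 statements merged into one kernel-verified Lean document; each statement's English description precedes it below -/
import Mathlib

section
/- For a map g on a manifold and a point x, if for all 1 ≤ k ≤ h the Birkhoff sums satisfy S_k ψ(x_{h-k}) ≤ -ck (where ψ(y) = log‖Dg(y)⁻¹‖ and x_j = g^j(x)), then for every vector v tangent at x, ‖Dg^h(x)v‖ ≥ e^{ch}‖v‖; more precisely ‖(Dg^h(x))⁻¹‖ ≤ e^{-ch}. -/
/-- If along the orbit of `x` the Birkhoff sums of `ψ(y) = log ‖Dg(y)⁻¹‖` satisfy
`S_k ψ(x_{h-k}) ≤ -ck` for all `1 ≤ k ≤ h`, then the derivative of the `h`-th iterate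
expands: `‖(Dg^h(x))⁻¹‖ ≤ e^{-ch}` and `‖Dg^h(x) v‖ ≥ e^{ch} ‖v‖` for every tangent
vector `v`.  Here `D j` is the derivative of `g` at the `j`-th orbit point `x_j`, and
`P k` is the derivative of the `k`-th iterate `g^k` at `x`, i.e. `P k = D (k-1) ∘ ⋯ ∘ D 0`. -/
theorem hyperbolic_time_expansion {E : Type*} [NormedAddCommGroup E] [NormedSpace ℝ E]
    (c : ℝ) (hc : 0 < c) (h : ℕ)
    (D : ℕ → (E ≃L[ℝ] E)) (P : ℕ → (E ≃L[ℝ] E))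
    (hP0 : P 0 = ContinuousLinearEquiv.refl ℝ E)
    (hPs : ∀ k, P (k + 1) = (P k).trans (D k))
    (hht : ∀ k, 1 ≤ k → k ≤ h →
      ∑ i ∈ Finset.range k, Real.log ‖((D (h - k + i)).symm : E →L[ℝ] E)‖ ≤ -c * k) :
    ‖((P h).symm : E →L[ℝ] E)‖ ≤ Real.exp (-c * h) ∧
      ∀ v : E, Real.exp (c * h) * ‖v‖ ≤ ‖P h v‖ := by
  have key : ‖((P h).symm : E →L[ℝ] E)‖ ≤ Real.exp (-c * h) := by
    rcases subsingleton_or_nontrivial E with hs | hn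
    · have : ((P h).symm : E →L[ℝ] E) = 0 := Subsingleton.elim _ _
      rw [this, norm_zero]
      positivity
    · have hDpos : ∀ i, 0 < ‖((D i).symm : E →L[ℝ] E)‖ := by
        intro i
        rw [norm_pos_iff]
        intro h0
        obtain ⟨v, hv⟩ := exists_ne (0 : E)
        apply hv
        have hv' : (D i).symm v = 0 := by
          have := congrArg (fun f : E →L[ℝ] E => f v) h0
          simpa using this
        have := congrArg (D i) hv'
        simpa using this
      have hprod : ∀ k, ‖((P k).symm : E →L[ℝ] E)‖ ≤
          ∏ i ∈ Finset.range k, ‖((D i).symm : E →L[ℝ] E)‖ := by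
        intro k
        induction k with
        | zero => simp [hP0]
        | succ k ih =>
          rw [hPs k, Finset.prod_range_succ]
          have hco : (((P k).trans (D k)).symm : E →L[ℝ] E)
              = ((P k).symm : E →L[ℝ] E).comp ((D k).symm : E →L[ℝ] E) := rfl
          rw [hco]
          calc ‖((P k).symm : E →L[ℝ] E).comp ((D k).symm : E →L[ℝ] E)‖
              ≤ ‖((P k).symm : E →L[ℝ] E)‖ * ‖((D k).symm : E →L[ℝ] E)‖ :=
                ContinuousLinearMap.opNorm_comp_le _ _
            _ ≤ (∏ i ∈ Finset.range k, ‖((D i).symm : E →L[ℝ] E)‖) *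
                ‖((D k).symm : E →L[ℝ] E)‖ :=
                mul_le_mul_of_nonneg_right ih (norm_nonneg _)
      rcases Nat.eq_zero_or_pos h with h0 | h1
      · subst h0
        simpa [hP0] using (hprod 0).trans (by simp)
      · calc ‖((P h).symm : E →L[ℝ] E)‖
            ≤ ∏ i ∈ Finset.range h, ‖((D i).symm : E →L[ℝ] E)‖ := hprod h
          _ = Real.exp (∑ i ∈ Finset.range h,
                Real.log ‖((D i).symm : E →L[ℝ] E)‖) := by
              rw [Real.exp_sum]
              exact Finset.prod_congr rfl fun i _ => (Real.exp_log (hDpos i)).symm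
          _ ≤ Real.exp (-c * h) := by
              apply Real.exp_le_exp.2
              have := hht h h1 le_rfl
              simpa [Nat.sub_self] using this
  refine ⟨key, fun v => ?_⟩
  have hle : ‖v‖ ≤ Real.exp (-c * h) * ‖P h v‖ := by
    calc ‖v‖ = ‖(P h).symm (P h v)‖ := by simp
      _ ≤ ‖((P h).symm : E →L[ℝ] E)‖ * ‖P h v‖ :=
          ((P h).symm : E →L[ℝ] E).le_opNorm _
      _ ≤ Real.exp (-c * h) * ‖P h v‖ :=
          mul_le_mul_of_nonneg_right key (norm_nonneg _)
  have hmul := mul_le_mul_of_nonneg_left hle (Real.exp_pos (c * h)).le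
  calc Real.exp (c * h) * ‖v‖ ≤ Real.exp (c * h) * (Real.exp (-c * h) * ‖P h v‖) := hmul
    _ = ‖P h v‖ := by
        rw [← mul_assoc, ← Real.exp_add]
        simp
end

section
/- If K is a compact, forward-invariant set for a C² interval map g₀ that contains no critical points of g₀ and no (non-repelling) periodic points, and g₀ restricted to a neighborhood of K is a uniformly expanding local diffeomorphism, then K has zero Lebesgue measure. -/
open MeasureTheory

open Set Metric Filter Topology Function
open scoped ENNReal NNReal

lemma iterate_hasDerivAt (f φ : ℝ → ℝ) (hd : ∀ x, HasDerivAt f (φ x) x) (m : ℕ) (x : ℝ) :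
    HasDerivAt (f^[m]) (∏ i ∈ Finset.range m, φ (f^[i] x)) x := by
  induction m with
  | zero => simpa using hasDerivAt_id x
  | succ m ih =>
    rw [Function.iterate_succ']
    have h := (hd (f^[m] x)).comp x ih
    simpa [Finset.prod_range_succ, mul_comm] using h

lemma no_interval (a b : ℝ) (f φ : ℝ → ℝ) (hd : ∀ x, HasDerivAt f (φ x) x)
    (K : Set ℝ) (hKI : K ⊆ Set.Icc a b) (hKinv : Set.MapsTo f K K)
    (h2 : ∀ x ∈ K, 2 ≤ |φ x|)
    (u v : ℝ) (huv : u < v) (hsub : Set.Icc u v ⊆ K) : False := by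
  obtain ⟨m, hm⟩ : ∃ m : ℕ, (b - a) / (v - u) < 2 ^ m :=
    pow_unbounded_of_one_lt _ one_lt_two
  have horb : ∀ x ∈ K, ∀ i : ℕ, f^[i] x ∈ K := by
    intro x hx i
    induction i with
    | zero => simpa using hx
    | succ i ih => rw [Function.iterate_succ_apply']; exact hKinv ih
  obtain ⟨c, hc, hceq⟩ := exists_hasDerivAt_eq_slope (f^[m]) _ huv
      (fun x _ => (iterate_hasDerivAt f φ hd m x).continuousAt.continuousWithinAt)
      (fun x _ => iterate_hasDerivAt f φ hd m x)
  have hcK : c ∈ K := hsub (Ioo_subset_Icc_self hc)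
  have hlow : (2:ℝ) ^ m ≤ |∏ i ∈ Finset.range m, φ (f^[i] c)| := by
    rw [Finset.abs_prod]
    calc (2:ℝ) ^ m = ∏ _i ∈ Finset.range m, (2:ℝ) := by simp
      _ ≤ _ := Finset.prod_le_prod (by intros; norm_num)
          (fun i _ => h2 _ (horb c hcK i))
  rw [hceq] at hlow
  have hmu : f^[m] u ∈ Set.Icc a b := hKI (horb u (hsub (by simp [le_of_lt huv])) m)
  have hmv : f^[m] v ∈ Set.Icc a b := hKI (horb v (hsub (by simp [le_of_lt huv])) m)
  have hnum : |f^[m] v - f^[m] u| ≤ b - a :=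
    abs_le.2 ⟨by linarith [hmu.1, hmv.1, hmu.2, hmv.2], by linarith [hmu.1, hmv.2]⟩
  have hub : |(f^[m] v - f^[m] u) / (v - u)| ≤ (b - a) / (v - u) := by
    rw [abs_div, abs_of_pos (by linarith : (0:ℝ) < v - u)]
    gcongr
  linarith

set_option maxHeartbeats 1600000 in
lemma key (a b : ℝ) (hab : a < b) (f φ : ℝ → ℝ)
    (hd : ∀ x, HasDerivAt f (φ x) x)
    (Lφ : NNReal) (hLφ : LipschitzWith Lφ φ)
    (hmapI : Set.MapsTo f (Set.Icc a b) (Set.Icc a b))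
    (K : Set ℝ) (hK : IsCompact K) (hKI : K ⊆ Set.Icc a b)
    (hKinv : Set.MapsTo f K K)
    (h2 : ∀ x ∈ K, 2 ≤ |φ x|) :
    volume K = 0 := by
  by_contra hvol
  have hφc : Continuous φ := hLφ.continuous
  have hfc : Continuous f := by
    rw [continuous_iff_continuousAt]; exact fun z => (hd z).differentiableAt.continuousAt
  have horb : ∀ x ∈ K, ∀ i : ℕ, f^[i] x ∈ K := by
    intro x hx i
    induction i with
    | zero => simpa using hx
    | succ i ih => rw [Function.iterate_succ_apply']; exact hKinv ih
  -- neighborhood where |φ| ≥ 3/2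
  have hU : IsOpen {z : ℝ | (3:ℝ)/2 < |φ z|} := isOpen_lt continuous_const hφc.abs
  obtain ⟨ρ₀, hρ₀, hth⟩ := hK.exists_thickening_subset_open hU
    (fun z hz => by simpa using lt_of_lt_of_le (by norm_num) (h2 z hz))
  set ρ := ρ₀ / 2 with hρdef
  have hρ : 0 < ρ := by positivity
  have hV : ∀ z y, y ∈ K → |z - y| ≤ ρ → (3:ℝ)/2 ≤ |φ z| := by
    intro z y hy hzy
    have : z ∈ Metric.thickening ρ₀ K := by
      rw [Metric.mem_thickening_iff]
      exact ⟨y, hy, by rw [Real.dist_eq]; linarith⟩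
    exact le_of_lt (hth this)
  -- Lipschitz constant for f on Icc a b
  obtain ⟨zM, _, hzM⟩ := isCompact_Icc.exists_isMaxOn (α := ℝ) ⟨a, by simp [le_of_lt hab]⟩
    (hφc.abs.continuousOn : ContinuousOn (fun z => |φ z|) (Set.Icc a b))
  set M : ℝ := max (|φ zM|) 1 with hMdef
  have hM1 : 1 ≤ M := le_max_right _ _
  have hM0 : 0 < M := by linarith
  have hMf : ∀ s ∈ Set.Icc a b, ∀ t ∈ Set.Icc a b, |f s - f t| ≤ M * |s - t| := by
    intro s hs t ht
    have := Convex.norm_image_sub_le_of_norm_hasDerivWithin_le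
      (f := f) (f' := φ) (s := Set.Icc a b) (C := M)
      (fun z _ => (hd z).hasDerivWithinAt)
      (fun z hz => by
        have h1 : |φ z| ≤ |φ zM| := hzM hz
        have h2' : |φ zM| ≤ M := le_max_left _ _
        simpa [Real.norm_eq_abs] using le_trans h1 h2')
      (convex_Icc a b) ht hs
    simpa [Real.norm_eq_abs] using this
  -- the scale δ
  set δ : ℝ := min ρ ((b - a) / 2) with hδdef
  have hδ : 0 < δ := lt_min hρ (by linarith)
  have hδρ : δ ≤ ρ := min_le_left _ _
  have hδba : δ ≤ (b - a) / 2 := min_le_right _ _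
  -- K contains no interval
  have hNoInt : ∀ u v : ℝ, u < v → ¬ (Set.Ioo u v ⊆ K) := by
    intro u v huv hsub
    refine no_interval a b f φ hd K hKI hKinv h2 (u + (v - u) / 4) (v - (v - u) / 4)
      (by linarith) (le_trans (Set.Icc_subset_Ioo (by linarith) (by linarith)) hsub)
  -- the gap function F
  set F : ℝ → ℝ := fun c => (volume (Set.Ioo c (c + δ) \ K)).toReal with hFdef
  have hFfin : ∀ c : ℝ, volume (Set.Ioo c (c + δ) \ K) ≠ ⊤ := by
    intro c
    refine ne_top_of_le_ne_top ?_ (measure_mono Set.diff_subset)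
    simp [Real.volume_Ioo]
  have hFle : ∀ c c' : ℝ, F c ≤ F c' + |c - c'| := by
    intro c c'
    have hss : Set.Ioo c (c + δ) \ K ⊆ (Set.Ioo c' (c' + δ) \ K) ∪
        (Set.Ioo c (c + δ) \ Set.Ioo c' (c' + δ)) := by
      intro z hz
      by_cases h : z ∈ Set.Ioo c' (c' + δ)
      · exact Or.inl ⟨h, hz.2⟩
      · exact Or.inr ⟨hz.1, h⟩
    have hdiff : volume (Set.Ioo c (c + δ) \ Set.Ioo c' (c' + δ)) ≤ ENNReal.ofReal |c - c'| := by
      rcases le_total c c' with h | h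
      · have hsub2 : Set.Ioo c (c + δ) \ Set.Ioo c' (c' + δ) ⊆ Set.Ioc c c' := by
          intro z hz
          rcases hz with ⟨⟨hz3, hz4⟩, hz2⟩
          have : z ≤ c' := by
            by_contra hcon
            exact hz2 ⟨not_le.1 hcon, by linarith⟩
          exact Set.mem_Ioc.2 ⟨hz3, this⟩
        refine le_trans (measure_mono hsub2) ?_
        rw [Real.volume_Ioc]
        exact ENNReal.ofReal_le_ofReal (by rw [abs_sub_comm]; exact le_abs_self _)
      · have hsub2 : Set.Ioo c (c + δ) \ Set.Ioo c' (c' + δ) ⊆ Set.Ico (c' + δ) (c + δ) := by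
          intro z hz
          rcases hz with ⟨⟨hz3, hz4⟩, hz2⟩
          have : c' + δ ≤ z := by
            by_contra hcon
            exact hz2 ⟨by linarith, not_le.1 hcon⟩
          exact Set.mem_Ico.2 ⟨this, hz4⟩
        refine le_trans (measure_mono hsub2) ?_
        rw [Real.volume_Ico]
        exact ENNReal.ofReal_le_ofReal (by nlinarith [le_abs_self (c - c')])
    have := le_trans (measure_mono hss) (le_trans (measure_union_le _ _)
      (add_le_add le_rfl hdiff))
    calc F c = (volume (Set.Ioo c (c + δ) \ K)).toReal := rfl
      _ ≤ ((volume (Set.Ioo c' (c' + δ) \ K)) + ENNReal.ofReal |c - c'|).toReal := by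
          refine ENNReal.toReal_mono ?_ this
          exact ENNReal.add_ne_top.2 ⟨hFfin c', ENNReal.ofReal_ne_top⟩
      _ = F c' + |c - c'| := by
          rw [ENNReal.toReal_add (hFfin c') ENNReal.ofReal_ne_top,
            ENNReal.toReal_ofReal (abs_nonneg _)]
  have hFcont : Continuous F := by
    refine LipschitzWith.continuous (K := 1) (LipschitzWith.of_dist_le_mul ?_)
    intro c c'
    rw [Real.dist_eq, Real.dist_eq, NNReal.coe_one, one_mul]
    rw [abs_sub_le_iff]
    constructor
    · linarith [hFle c c']
    · linarith [hFle c' c, abs_sub_comm c c']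
  have hFpos : ∀ c ∈ Set.Icc a (b - δ), 0 < F c := by
    intro c _
    have hopen : IsOpen (Set.Ioo c (c + δ) \ K) := (isOpen_Ioo).sdiff hK.isClosed
    have hne : (Set.Ioo c (c + δ) \ K).Nonempty := by
      by_contra hcon
      rw [Set.not_nonempty_iff_eq_empty, Set.diff_eq_empty] at hcon
      exact hNoInt c (c + δ) (by linarith) hcon
    have := hopen.measure_pos volume hne
    exact ENNReal.toReal_pos this.ne' (hFfin c)
  obtain ⟨c₀, hc₀, hminF⟩ := isCompact_Icc.exists_isMinOn (α := ℝ)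
    (⟨a, le_refl a, by linarith⟩ : (Set.Icc a (b - δ)).Nonempty)
    (hFcont.continuousOn : ContinuousOn F (Set.Icc a (b - δ)))
  set ε : ℝ := F c₀ with hεdef
  have hε : 0 < ε := hFpos c₀ hc₀
  have hεle : ∀ p q : ℝ, a ≤ p → q ≤ b → p + δ ≤ q →
      ENNReal.ofReal ε ≤ volume (Set.Icc p q \ K) := by
    intro p q hp hq hpq
    have hpmem : p ∈ Set.Icc a (b - δ) := ⟨hp, by linarith⟩
    have h1 : ε ≤ F p := hminF hpmem
    calc ENNReal.ofReal ε ≤ ENNReal.ofReal (F p) := ENNReal.ofReal_le_ofReal h1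
      _ = volume (Set.Ioo p (p + δ) \ K) := ENNReal.ofReal_toReal (hFfin p)
      _ ≤ volume (Set.Icc p q \ K) := measure_mono (Set.diff_subset_diff_left
          (le_trans Set.Ioo_subset_Icc_self (Set.Icc_subset_Icc le_rfl (by linarith))))
  -- Lebesgue density point
  obtain ⟨x, hxK, hxQ⟩ : ∃ x ∈ K, Tendsto
      (fun r => volume (K ∩ Metric.closedBall x r) / volume (Metric.closedBall x r))
      (𝓝[>] 0) (𝓝 1) := by
    by_contra hcon
    push_neg at hcon
    have h1 : volume.restrict K {x | ¬ Tendsto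
        (fun r => volume (K ∩ Metric.closedBall x r) / volume (Metric.closedBall x r))
        (𝓝[>] 0) (𝓝 1)} = 0 := by
      simpa [ae_iff] using Besicovitch.ae_tendsto_measure_inter_div volume K
    have h2 : volume.restrict K K ≤ 0 := h1 ▸ measure_mono (fun x hx => hcon x hx)
    rw [Measure.restrict_apply_self] at h2
    exact hvol (le_antisymm h2 (zero_le))
  -- constants
  set D : ℝ := Real.exp (2 * (Lφ : ℝ) * δ) with hDdef
  have hD1 : (1:ℝ) ≤ D := Real.one_le_exp (by positivity)
  set η : ℝ := min (ε / (8 * D * M * δ)) 1 with hηdef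
  have hη0 : 0 < η := lt_min (by positivity) one_pos
  have hη1 : η ≤ 1 := min_le_right _ _
  have hηε : η ≤ ε / (8 * D * M * δ) := min_le_left _ _
  -- eventually, small balls have small complement proportion
  have hev1 : ∀ᶠ r in 𝓝[>] (0:ℝ),
      volume (Metric.closedBall x r \ K) ≤ ENNReal.ofReal (η * (2 * r)) := by
    have hIoi : Set.Ioi (1 - ENNReal.ofReal η) ∈ 𝓝 (1 : ℝ≥0∞) :=
      isOpen_Ioi.mem_nhds (ENNReal.sub_lt_self ENNReal.one_ne_top one_ne_zero
        (ENNReal.ofReal_pos.2 hη0).ne')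
    filter_upwards [hxQ hIoi, self_mem_nhdsWithin] with r hr hrpos
    have hrpos' : (0:ℝ) < r := hrpos
    have hcb : volume (Metric.closedBall x r) = ENNReal.ofReal (2 * r) :=
      Real.volume_closedBall x r
    have hfin : volume (Metric.closedBall x r) ≠ ⊤ := by
      rw [hcb]; exact ENNReal.ofReal_ne_top
    have hmul : (1 - ENNReal.ofReal η) * volume (Metric.closedBall x r)
        ≤ volume (K ∩ Metric.closedBall x r) :=
      ENNReal.mul_le_of_le_div (le_of_lt hr)
    have hsplit : volume (Metric.closedBall x r ∩ K) + volume (Metric.closedBall x r \ K)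
        = volume (Metric.closedBall x r) := measure_inter_add_diff _ hK.measurableSet
    have he1 : (1 - ENNReal.ofReal η) + ENNReal.ofReal η = 1 :=
      tsub_add_cancel_of_le (by simpa using ENNReal.ofReal_le_one.2 hη1)
    have h3 : (1 - ENNReal.ofReal η) * volume (Metric.closedBall x r)
        + volume (Metric.closedBall x r \ K) ≤
        (1 - ENNReal.ofReal η) * volume (Metric.closedBall x r)
        + ENNReal.ofReal η * volume (Metric.closedBall x r) := by
      rw [← add_mul, he1, one_mul]
      calc (1 - ENNReal.ofReal η) * volume (Metric.closedBall x r)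
            + volume (Metric.closedBall x r \ K)
          ≤ volume (K ∩ Metric.closedBall x r) + volume (Metric.closedBall x r \ K) :=
            add_le_add_left hmul _
        _ = volume (Metric.closedBall x r) := by rw [Set.inter_comm]; exact hsplit
    have h4 : volume (Metric.closedBall x r \ K)
        ≤ ENNReal.ofReal η * volume (Metric.closedBall x r) :=
      (ENNReal.add_le_add_iff_left (ne_top_of_le_ne_top hfin
        (by calc (1 - ENNReal.ofReal η) * volume (Metric.closedBall x r)
              ≤ 1 * volume (Metric.closedBall x r) := by gcongr; exact tsub_le_self
            _ = volume (Metric.closedBall x r) := one_mul _))).1 h3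
    calc volume (Metric.closedBall x r \ K)
        ≤ ENNReal.ofReal η * volume (Metric.closedBall x r) := h4
      _ = ENNReal.ofReal (η * (2 * r)) := by
          rw [hcb, ← ENNReal.ofReal_mul hη0.le]
  have hev2 : ∀ᶠ r in 𝓝[>] (0:ℝ), r < min (δ / 2) (b - a) :=
    eventually_nhdsWithin_of_eventually_nhds
      (Filter.Tendsto.eventually_lt_const (lt_min (by linarith) (by linarith)) Filter.tendsto_id)
  obtain ⟨r, hrvol, hrlt, hr0⟩ : ∃ r : ℝ,
      volume (Metric.closedBall x r \ K) ≤ ENNReal.ofReal (η * (2 * r)) ∧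
      r < min (δ / 2) (b - a) ∧ r ∈ Set.Ioi (0:ℝ) :=
    (hev1.and (hev2.and self_mem_nhdsWithin)).exists
  have hr0' : (0:ℝ) < r := hr0
  have hr2δ : 2 * r < δ := by
    have := lt_of_lt_of_le hrlt (min_le_left _ _); linarith
  have hrba : r ≤ b - a := le_of_lt (lt_of_lt_of_le hrlt (min_le_right _ _))
  -- the window W around x
  set w₁ : ℝ := max a (x - r) with hw1def
  set w₂ : ℝ := min b (x + r) with hw2def
  obtain ⟨hxa, hxb⟩ := hKI hxK
  have hw1a : a ≤ w₁ := le_max_left _ _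
  have hw2b : w₂ ≤ b := min_le_left _ _
  have hxw1 : w₁ ≤ x := max_le hxa (by linarith)
  have hxw2 : x ≤ w₂ := le_min hxb (by linarith)
  have hlen1 : r ≤ w₂ - w₁ := by
    rcases le_total a (x - r) with h | h <;> rcases le_total (x + r) b with h' | h'
    · rw [hw1def, hw2def, max_eq_right h, min_eq_right h']; linarith
    · rw [hw1def, hw2def, max_eq_right h, min_eq_left h']; linarith
    · rw [hw1def, hw2def, max_eq_left h, min_eq_right h']; linarith
    · rw [hw1def, hw2def, max_eq_left h, min_eq_left h']; linarith
  have hlen2 : w₂ - w₁ ≤ 2 * r := by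
    have h1 : x - r ≤ w₁ := le_max_right _ _
    have h2 : w₂ ≤ x + r := min_le_right _ _
    linarith
  have hw12 : w₁ < w₂ := by linarith
  set W : Set ℝ := Set.Icc w₁ w₂ with hWdef
  have hxW : x ∈ W := ⟨hxw1, hxw2⟩
  have hWI : W ⊆ Set.Icc a b := Set.Icc_subset_Icc hw1a hw2b
  have hWcb : W ⊆ Metric.closedBall x r := by
    intro z hz
    rw [Metric.mem_closedBall, Real.dist_eq, abs_le]
    have h1 : x - r ≤ w₁ := le_max_right _ _
    have h2 : w₂ ≤ x + r := min_le_right _ _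
    exact ⟨by linarith [hz.1], by linarith [hz.2]⟩
  -- the iterated images
  set p : ℕ → ℝ := fun i => sInf (f^[i] '' W) with hpdef
  set q : ℕ → ℝ := fun i => sSup (f^[i] '' W) with hqdef
  have hWieq : ∀ i, f^[i] '' W = Set.Icc (p i) (q i) := fun i =>
    eq_Icc_of_connected_compact
      ⟨⟨f^[i] x, Set.mem_image_of_mem _ hxW⟩,
        (isPreconnected_Icc).image _ (hfc.iterate i).continuousOn⟩
      (isCompact_Icc.image (hfc.iterate i))
  have hWiI : ∀ i, f^[i] '' W ⊆ Set.Icc a b := by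
    intro i
    induction i with
    | zero => simpa using hWI
    | succ i ih =>
      rw [Function.iterate_succ', Set.image_comp]
      exact (Set.image_mono (f := f) ih).trans hmapI.image_subset
  obtain ⟨el, helq⟩ : ∃ el : ℕ → ℝ, ∀ i, el i = q i - p i :=
    ⟨fun i => q i - p i, fun i => rfl⟩
  have hmemx : ∀ i, f^[i] x ∈ Set.Icc (p i) (q i) := fun i =>
    (hWieq i) ▸ Set.mem_image_of_mem _ hxW
  have hpq : ∀ i, p i ≤ q i := fun i => le_trans (hmemx i).1 (hmemx i).2
  have hel0 : ∀ i, 0 ≤ el i := fun i => by rw [helq]; linarith [hpq i]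
  have hpmem : ∀ i, p i ∈ f^[i] '' W := fun i => by
    rw [hWieq i]; exact ⟨le_refl _, hpq i⟩
  have hqmem : ∀ i, q i ∈ f^[i] '' W := fun i => by
    rw [hWieq i]; exact ⟨hpq i, le_refl _⟩
  have hpa : ∀ i, a ≤ p i := fun i => (hWiI i (hpmem i)).1
  have hqb : ∀ i, q i ≤ b := fun i => (hWiI i (hqmem i)).2
  have helba : ∀ i, el i ≤ b - a := fun i => by
    have := (hWiI i (hpmem i)).1
    have := (hWiI i (hqmem i)).2
    rw [helq]; linarith
  have hcover : ∀ i, ∀ z ∈ f^[i] '' W, ∀ z' ∈ f^[i] '' W, |z - z'| ≤ el i := by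
    intro i z hz z' hz'
    rw [hWieq i] at hz hz'
    rw [abs_le]
    rw [helq]
    constructor <;> [linarith [hz.1, hz'.2]; linarith [hz.2, hz'.1]]
  have himgsucc : ∀ i, f^[i+1] '' W = f '' (f^[i] '' W) := by
    intro i; rw [Function.iterate_succ', Set.image_comp]
  -- expansion on a δ-neighborhood of K
  have hφV : ∀ i, el i ≤ δ → ∀ z ∈ f^[i] '' W, (3:ℝ)/2 ≤ |φ z| := by
    intro i hi z hz
    exact hV z (f^[i] x) (horb x hxK i)
      (le_trans (hcover i z hz _ ((hWieq i) ▸ hmemx i)) (le_trans hi hδρ))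
  have hstepM : ∀ i, el (i+1) ≤ M * el i := by
    intro i
    obtain ⟨s, hs, hseq⟩ : q (i+1) ∈ f '' (f^[i] '' W) := (himgsucc i) ▸ hqmem (i+1)
    obtain ⟨t, ht, hteq⟩ : p (i+1) ∈ f '' (f^[i] '' W) := (himgsucc i) ▸ hpmem (i+1)
    have h1 : |f s - f t| ≤ M * |s - t| := hMf s (hWiI i hs) t (hWiI i ht)
    have h2 : |s - t| ≤ el i := hcover i s hs t ht
    have h3 : el (i+1) = f s - f t := by rw [helq, ← hseq, ← hteq]
    calc el (i+1) = f s - f t := h3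
      _ ≤ |f s - f t| := le_abs_self _
      _ ≤ M * |s - t| := h1
      _ ≤ M * el i := by gcongr
  have hstep2 : ∀ i, el i ≤ δ → (3:ℝ)/2 * el i ≤ el (i+1) := by
    intro i hi
    rcases eq_or_lt_of_le (hpq i) with he | hlt'
    · have hz : el i = 0 := by rw [helq, ← he, sub_self]
      rw [hz]
      simpa using hel0 (i+1)
    · obtain ⟨c, hcIoo, hceq⟩ := exists_hasDerivAt_eq_slope f φ hlt'
        hfc.continuousOn (fun z _ => hd z)
      have hcmem : c ∈ f^[i] '' W := by
        rw [hWieq i]; exact Set.Ioo_subset_Icc_self hcIoo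
      have h32 : (3:ℝ)/2 ≤ |φ c| := hφV i hi c hcmem
      have hnum : (3:ℝ)/2 * el i ≤ |f (q i) - f (p i)| := by
        have : |φ c| * (q i - p i) ≤ |(f (q i) - f (p i)) / (q i - p i)| * (q i - p i) := by
          rw [hceq]
        rw [abs_div, abs_of_pos (by linarith : (0:ℝ) < q i - p i)] at this
        have h4 : |φ c| * (q i - p i) ≤ |f (q i) - f (p i)| := by
          rw [div_mul_cancel₀] at this
          · exact this
          · linarith
        calc (3:ℝ)/2 * el i ≤ |φ c| * el i := by
              have := hel0 i; gcongr
          _ = |φ c| * (q i - p i) := by rw [helq]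
          _ ≤ |f (q i) - f (p i)| := h4
      have hfq : f (q i) ∈ Set.Icc (p (i+1)) (q (i+1)) := by
        rw [← hWieq (i+1), himgsucc i]; exact Set.mem_image_of_mem f (hqmem i)
      have hfp : f (p i) ∈ Set.Icc (p (i+1)) (q (i+1)) := by
        rw [← hWieq (i+1), himgsucc i]; exact Set.mem_image_of_mem f (hpmem i)
      have : |f (q i) - f (p i)| ≤ el (i+1) := by
        rw [abs_le, helq]
        constructor <;> [linarith [hfq.1, hfp.2]; linarith [hfq.2, hfp.1]]
      linarith
  -- the first length r is trapped between r and 2r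
  have hW0 : f^[0] '' W = W := by simp
  have hwmem1 : w₁ ∈ W := ⟨le_refl _, le_of_lt hw12⟩
  have hwmem2 : w₂ ∈ W := ⟨le_of_lt hw12, le_refl _⟩
  have hel0low : r ≤ el 0 := by
    have h1 : w₁ ∈ Set.Icc (p 0) (q 0) := by rw [← hWieq 0, hW0]; exact hwmem1
    have h2 : w₂ ∈ Set.Icc (p 0) (q 0) := by rw [← hWieq 0, hW0]; exact hwmem2
    rw [helq]; linarith [h1.1, h2.2]
  have hel0up : el 0 < δ := by
    have h1 : p 0 ∈ W := by rw [← hW0]; exact hpmem 0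
    have h2 : q 0 ∈ W := by rw [← hW0]; exact hqmem 0
    rw [helq]
    linarith [h1.1, h2.2, hr2δ, hlen2]
  -- the stopping time
  have hex : ∃ m, δ ≤ el m := by
    by_contra hcon
    push_neg at hcon
    have hgrow : ∀ m, (3/2:ℝ) ^ m * r ≤ el m := by
      intro m
      induction m with
      | zero => simpa using hel0low
      | succ m ih =>
        calc (3/2:ℝ) ^ (m+1) * r = (3:ℝ)/2 * ((3/2:ℝ)^m * r) := by ring
          _ ≤ (3:ℝ)/2 * el m := by gcongr
          _ ≤ el (m+1) := hstep2 m (le_of_lt (hcon m))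
    obtain ⟨m, hm⟩ : ∃ m : ℕ, (b - a) / r < (3/2:ℝ) ^ m :=
      pow_unbounded_of_one_lt _ (by norm_num)
    have h1 : (3/2:ℝ) ^ m * r ≤ b - a := le_trans (hgrow m) (helba m)
    rw [div_lt_iff₀ hr0'] at hm
    linarith
  set n : ℕ := Nat.find hex with hndef
  have hδn : δ ≤ el n := Nat.find_spec hex
  have hlt : ∀ i, i < n → el i < δ := fun i hi => not_le.1 (Nat.find_min hex hi)
  have hn1 : 1 ≤ n := by
    rcases Nat.eq_zero_or_pos n with h | h
    · exfalso; rw [h] at hδn; linarith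
    · exact h
  -- geometric decay of the lengths backwards
  have hgeom : ∀ k, k < n → el (n - 1 - k) ≤ (2/3:ℝ) ^ k * δ := by
    intro k
    induction k with
    | zero => intro hk; simpa using le_of_lt (hlt (n-1) (by omega))
    | succ k ih =>
      intro hk
      have hidx : n - 1 - k = (n - 1 - (k+1)) + 1 := by omega
      have h1 : (3:ℝ)/2 * el (n - 1 - (k+1)) ≤ el (n - 1 - k) := by
        rw [hidx]
        exact hstep2 _ (le_of_lt (hlt _ (by omega)))
      have h2 : el (n - 1 - k) ≤ (2/3:ℝ)^k * δ := ih (by omega)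
      have h3 : (3:ℝ)/2 * el (n - 1 - (k+1)) ≤ (2/3:ℝ)^k * δ := le_trans h1 h2
      calc el (n - 1 - (k+1)) = (2:ℝ)/3 * ((3:ℝ)/2 * el (n - 1 - (k+1))) := by ring
        _ ≤ (2:ℝ)/3 * ((2/3:ℝ)^k * δ) := by gcongr
        _ = (2/3:ℝ)^(k+1) * δ := by ring
  have hsum : ∑ i ∈ Finset.range n, el i ≤ 3 * δ := by
    have hrefl : ∑ i ∈ Finset.range n, el i
        = ∑ k ∈ Finset.range n, el (n - 1 - k) := (Finset.sum_range_reflect el n).symm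
    rw [hrefl]
    calc ∑ k ∈ Finset.range n, el (n - 1 - k) ≤ ∑ k ∈ Finset.range n, (2/3:ℝ)^k * δ :=
          Finset.sum_le_sum (fun k hk => hgeom k (Finset.mem_range.1 hk))
      _ = (∑ k ∈ Finset.range n, (2/3:ℝ)^k) * δ := by rw [Finset.sum_mul]
      _ ≤ 3 * δ := by
          have h1 : ∑ k ∈ Finset.range n, (2/3:ℝ)^k = ((2/3:ℝ)^n - 1)/((2/3:ℝ) - 1) :=
            geom_sum_eq (by norm_num) n
          have h2 : (0:ℝ) ≤ (2/3:ℝ)^n := by positivity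
          have h3 : ∑ k ∈ Finset.range n, (2/3:ℝ)^k ≤ 3 := by
            rw [h1]
            rw [div_le_iff_of_neg (by norm_num : (2/3:ℝ) - 1 < 0)]
            linarith
          nlinarith
  -- upper bound on el n
  have heln : el n ≤ M * δ := by
    have hidx : n = (n - 1) + 1 := by omega
    calc el n = el ((n-1) + 1) := by rw [← hidx]
      _ ≤ M * el (n-1) := hstepM (n-1)
      _ ≤ M * δ := by have := le_of_lt (hlt (n-1) (by omega)); gcongr
  -- mean value point for the full iterate
  obtain ⟨c, hcIoo, hceq⟩ := exists_hasDerivAt_eq_slope (f^[n])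
    (fun z => ∏ i ∈ Finset.range n, φ (f^[i] z)) hw12
    (fun z _ => (iterate_hasDerivAt f φ hd n z).continuousAt.continuousWithinAt)
    (fun z _ => iterate_hasDerivAt f φ hd n z)
  have hcW : c ∈ W := Set.Ioo_subset_Icc_self hcIoo
  have hslope : |∏ i ∈ Finset.range n, φ (f^[i] c)| ≤ M * δ / r := by
    rw [hceq]
    have h1 : f^[n] w₁ ∈ f^[n] '' W := Set.mem_image_of_mem _ ⟨le_refl _, le_of_lt hw12⟩
    have h2 : f^[n] w₂ ∈ f^[n] '' W := Set.mem_image_of_mem _ ⟨le_of_lt hw12, le_refl _⟩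
    have hnum : |f^[n] w₂ - f^[n] w₁| ≤ el n := hcover n _ h2 _ h1
    rw [abs_div, abs_of_pos (by linarith : (0:ℝ) < w₂ - w₁)]
    calc |f^[n] w₂ - f^[n] w₁| / (w₂ - w₁) ≤ el n / r :=
          div_le_div₀ (hel0 n) hnum hr0' hlen1
      _ ≤ M * δ / r := by gcongr
  have hLφ0 : (0:ℝ) ≤ (Lφ:ℝ) := Lφ.coe_nonneg
  have hD0 : (0:ℝ) < D := lt_of_lt_of_le one_pos hD1
  -- distortion estimate
  have hdist : ∀ u ∈ W, |∏ i ∈ Finset.range n, φ (f^[i] u)|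
      ≤ D * |∏ i ∈ Finset.range n, φ (f^[i] c)| := by
    intro u hu
    have hfac : ∀ i ∈ Finset.range n,
        |φ (f^[i] u)| ≤ |φ (f^[i] c)| * Real.exp (2/3 * (Lφ:ℝ) * el i) := by
      intro i hi
      rw [Finset.mem_range] at hi
      have hiu : f^[i] u ∈ f^[i] '' W := Set.mem_image_of_mem _ hu
      have hic : f^[i] c ∈ f^[i] '' W := Set.mem_image_of_mem _ hcW
      have hlipφ : |φ (f^[i] u) - φ (f^[i] c)| ≤ (Lφ:ℝ) * el i := by
        have h1 := hLφ.dist_le_mul (f^[i] u) (f^[i] c)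
        rw [Real.dist_eq, Real.dist_eq] at h1
        calc |φ (f^[i] u) - φ (f^[i] c)| ≤ (Lφ:ℝ) * |f^[i] u - f^[i] c| := h1
          _ ≤ (Lφ:ℝ) * el i :=
              mul_le_mul_of_nonneg_left (hcover i _ hiu _ hic) hLφ0
      have h32 : (3:ℝ)/2 ≤ |φ (f^[i] c)| := hφV i (le_of_lt (hlt i hi)) _ hic
      have heli := hel0 i
      have h1 : |φ (f^[i] u)| ≤ |φ (f^[i] c)| + (Lφ:ℝ) * el i := by
        have := abs_sub_abs_le_abs_sub (φ (f^[i] u)) (φ (f^[i] c))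
        linarith
      calc |φ (f^[i] u)| ≤ |φ (f^[i] c)| + (Lφ:ℝ) * el i := h1
        _ ≤ |φ (f^[i] c)| * (1 + 2/3 * (Lφ:ℝ) * el i) := by
            have hLel : (0:ℝ) ≤ (Lφ:ℝ) * el i := mul_nonneg hLφ0 heli
            nlinarith [mul_le_mul_of_nonneg_left h32 hLel]
        _ ≤ |φ (f^[i] c)| * Real.exp (2/3 * (Lφ:ℝ) * el i) := by
            have := Real.add_one_le_exp (2/3 * (Lφ:ℝ) * el i)
            nlinarith
    calc |∏ i ∈ Finset.range n, φ (f^[i] u)|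
        = ∏ i ∈ Finset.range n, |φ (f^[i] u)| := Finset.abs_prod _ _
      _ ≤ ∏ i ∈ Finset.range n, (|φ (f^[i] c)| * Real.exp (2/3 * (Lφ:ℝ) * el i)) :=
          Finset.prod_le_prod (fun i _ => abs_nonneg _) hfac
      _ = (∏ i ∈ Finset.range n, |φ (f^[i] c)|) *
          Real.exp (∑ i ∈ Finset.range n, 2/3 * (Lφ:ℝ) * el i) := by
          rw [Finset.prod_mul_distrib, Real.exp_sum]
      _ ≤ (∏ i ∈ Finset.range n, |φ (f^[i] c)|) * D := by
          refine mul_le_mul_of_nonneg_left ?_ (Finset.prod_nonneg (fun i _ => abs_nonneg _))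
          rw [hDdef]
          apply Real.exp_le_exp.2
          calc ∑ i ∈ Finset.range n, 2/3 * (Lφ:ℝ) * el i
              = 2/3 * (Lφ:ℝ) * ∑ i ∈ Finset.range n, el i := by rw [Finset.mul_sum]
            _ ≤ 2/3 * (Lφ:ℝ) * (3 * δ) :=
                mul_le_mul_of_nonneg_left hsum (by positivity)
            _ = 2 * (Lφ:ℝ) * δ := by ring
      _ = D * |∏ i ∈ Finset.range n, φ (f^[i] c)| := by
          rw [Finset.abs_prod]; ring
  -- Lipschitz constant for `f^[n]` on `W`
  set κ : ℝ := D * (M * δ / r) with hκdef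
  have hκ0 : (0:ℝ) ≤ κ := by
    rw [hκdef]
    exact mul_nonneg hD0.le (div_nonneg (mul_nonneg hM0.le hδ.le) hr0'.le)
  have hbound : ∀ u ∈ W, |∏ i ∈ Finset.range n, φ (f^[i] u)| ≤ κ := fun u hu =>
    le_trans (hdist u hu) (mul_le_mul_of_nonneg_left hslope hD0.le)
  have hpair : ∀ u ∈ W, ∀ v ∈ W, dist (f^[n] u) (f^[n] v) ≤ κ * dist u v := by
    intro u hu v hv
    have hres := Convex.norm_image_sub_le_of_norm_hasDerivWithin_le
      (f := f^[n]) (f' := fun z => ∏ i ∈ Finset.range n, φ (f^[i] z)) (s := W) (C := κ)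
      (fun z _ => (iterate_hasDerivAt f φ hd n z).hasDerivWithinAt)
      (fun z hz => by rw [Real.norm_eq_abs]; exact hbound z hz) (convex_Icc _ _) hv hu
    rw [Real.dist_eq, Real.dist_eq]
    simpa [Real.norm_eq_abs] using hres
  have hLipn : LipschitzOnWith (Real.toNNReal κ) (f^[n]) W :=
    LipschitzOnWith.of_dist_le_mul (fun u hu v hv => by
      rw [Real.coe_toNNReal κ hκ0]; exact hpair u hu v hv)
  -- measure estimates
  have himg : Set.Icc (p n) (q n) \ K ⊆ f^[n] '' (W \ K) := by
    intro y hy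
    obtain ⟨u, hu, huy⟩ : y ∈ f^[n] '' W := (hWieq n) ▸ hy.1
    exact ⟨u, ⟨hu, fun huK => hy.2 (huy ▸ horb u huK n)⟩, huy⟩
  have hpqn : p n + δ ≤ q n := by
    have h1 := hδn; rw [helq] at h1; linarith
  have hμ1 : ENNReal.ofReal ε ≤ volume (f^[n] '' (W \ K)) :=
    le_trans (hεle (p n) (q n) (hpa n) (hqb n) hpqn) (measure_mono himg)
  have hμ2 : volume (f^[n] '' (W \ K)) ≤ (Real.toNNReal κ : ℝ≥0∞) * volume (W \ K) := by
    have h1 := (hLipn.mono (Set.diff_subset (s := W) (t := K))).hausdorffMeasure_image_le zero_le_one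
    rw [MeasureTheory.hausdorffMeasure_real] at h1
    simpa [ENNReal.rpow_one] using h1
  have hμ3 : volume (W \ K) ≤ ENNReal.ofReal (η * (2 * r)) :=
    le_trans (measure_mono (Set.diff_subset_diff_left hWcb)) hrvol
  have hchain : ENNReal.ofReal ε ≤ ENNReal.ofReal (κ * (η * (2 * r))) := by
    calc ENNReal.ofReal ε ≤ volume (f^[n] '' (W \ K)) := hμ1
      _ ≤ (Real.toNNReal κ : ℝ≥0∞) * volume (W \ K) := hμ2
      _ ≤ (Real.toNNReal κ : ℝ≥0∞) * ENNReal.ofReal (η * (2 * r)) := by gcongr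
      _ = ENNReal.ofReal κ * ENNReal.ofReal (η * (2 * r)) := rfl
      _ = ENNReal.ofReal (κ * (η * (2 * r))) := (ENNReal.ofReal_mul hκ0).symm
  have hfinal : ε ≤ κ * (η * (2 * r)) := by
    have hnn : (0:ℝ) ≤ κ * (η * (2 * r)) :=
      mul_nonneg hκ0 (mul_nonneg hη0.le (by linarith))
    rwa [ENNReal.ofReal_le_ofReal_iff hnn] at hchain
  have hκr : κ * (η * (2 * r)) = 2 * (D * M * δ * η) := by
    rw [hκdef]; field_simp
  have h8 : η * (8 * D * M * δ) ≤ ε := by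
    rw [← le_div_iff₀ (by positivity)]
    exact hηε
  rw [hκr] at hfinal
  nlinarith [mul_pos (mul_pos (mul_pos hD0 hM0) hδ) hη0]

set_option maxHeartbeats 1600000 in
/-- If `K` is a compact forward-invariant set for a `C²` interval map `g₀`
containing no critical points, and `g₀` is uniformly expanding on `K`
(`|Dg₀ⁿ(x)| ≥ C λⁿ` on `K` for all `n ≥ 1`), then `K` has zero Lebesgue measure. -/
theorem expanding_invariant_cantor_null
    (a b : ℝ) (hab : a < b) (g₀ : ℝ → ℝ)
    (hmap : Set.MapsTo g₀ (Set.Icc a b) (Set.Icc a b))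
    (hC2 : ContDiffOn ℝ 2 g₀ (Set.Icc a b))
    (K : Set ℝ) (hK : IsCompact K) (hKI : K ⊆ Set.Icc a b)
    (hKinv : Set.MapsTo g₀ K K)
    (hcrit : ∀ x ∈ K, deriv g₀ x ≠ 0)
    (C lam : ℝ) (hC : 0 < C) (hlam : 1 < lam)
    (hexp : ∀ x ∈ K, ∀ n : ℕ, 1 ≤ n → C * lam ^ n ≤ |deriv (g₀^[n]) x|) :
    volume K = 0 := by
  -- iterates are C² self-maps of [a,b]
  have hiter : ∀ m : ℕ, ContDiffOn ℝ 2 (g₀^[m]) (Set.Icc a b) ∧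
      Set.MapsTo (g₀^[m]) (Set.Icc a b) (Set.Icc a b) := by
    intro m
    induction m with
    | zero =>
      constructor
      · simpa using contDiffOn_id
      · simpa using Set.mapsTo_id _
    | succ m ih =>
      rw [Function.iterate_succ']
      exact ⟨hC2.comp ih.1 (fun z hz => ih.2 hz), hmap.comp ih.2⟩
  -- choose the power N
  obtain ⟨N₀, hN₀⟩ : ∃ m : ℕ, 2 / C < lam ^ m := pow_unbounded_of_one_lt _ hlam
  set N : ℕ := N₀ + 1 with hNdef
  have hlam0 : (0:ℝ) < lam := lt_trans one_pos hlam
  have hN2 : (2:ℝ) ≤ C * lam ^ N := by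
    rw [div_lt_iff₀ hC] at hN₀
    have h2' : lam ^ N = lam ^ N₀ * lam := pow_succ lam N₀
    rw [h2']
    nlinarith [pow_pos hlam0 N₀]
  set G : ℝ → ℝ := g₀^[N] with hGdef
  have hGC2 : ContDiffOn ℝ 2 G (Set.Icc a b) := (hiter N).1
  have hGmap : Set.MapsTo G (Set.Icc a b) (Set.Icc a b) := (hiter N).2
  have hGK : Set.MapsTo G K K := hKinv.iterate N
  have hUD : UniqueDiffOn ℝ (Set.Icc a b) := uniqueDiffOn_Icc hab
  set φ₀ : ℝ → ℝ := derivWithin G (Set.Icc a b) with hφ₀def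
  have hφ₀cont : ContinuousOn φ₀ (Set.Icc a b) :=
    hGC2.continuousOn_derivWithin hUD (by norm_num)
  have hφ₀C1 : ContDiffOn ℝ 1 φ₀ (Set.Icc a b) :=
    hGC2.derivWithin hUD (by norm_num)
  -- Lipschitz bound for φ₀ on [a,b]
  obtain ⟨zL, _, hzL⟩ := isCompact_Icc.exists_isMaxOn (α := ℝ)
    ⟨a, le_refl a, hab.le⟩
    (((hφ₀C1.continuousOn_derivWithin hUD le_rfl).abs) :
      ContinuousOn (fun z => |derivWithin φ₀ (Set.Icc a b) z|) (Set.Icc a b))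
  set L : ℝ := max (|derivWithin φ₀ (Set.Icc a b) zL|) 0 with hLdef
  have hL0 : 0 ≤ L := le_max_right _ _
  have hφ₀lip : ∀ s ∈ Set.Icc a b, ∀ t ∈ Set.Icc a b, |φ₀ s - φ₀ t| ≤ L * |s - t| := by
    intro s hs t ht
    have := Convex.norm_image_sub_le_of_norm_derivWithin_le (f := φ₀) (C := L)
      (hφ₀C1.differentiableOn one_ne_zero)
      (fun z hz => by
        have h1 : |derivWithin φ₀ (Set.Icc a b) z| ≤ |derivWithin φ₀ (Set.Icc a b) zL| := hzL hz
        have h2' : |derivWithin φ₀ (Set.Icc a b) zL| ≤ L := le_max_left _ _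
        simpa [Real.norm_eq_abs] using le_trans h1 h2')
      (convex_Icc a b) ht hs
    simpa [Real.norm_eq_abs] using this
  -- clamp
  set π : ℝ → ℝ := fun z => max a (min b z) with hπdef
  have hπIcc : ∀ z, π z ∈ Set.Icc a b :=
    fun z => ⟨le_max_left _ _, max_le hab.le (min_le_left _ _)⟩
  have hπid : ∀ z ∈ Set.Icc a b, π z = z := by
    intro z hz
    rw [hπdef]
    simp only
    rw [min_eq_right hz.2, max_eq_right hz.1]
  have hπlt : ∀ z, z < a → π z = a := by
    intro z hz
    rw [hπdef]; simp only
    rw [min_eq_right (le_of_lt (lt_of_lt_of_le hz hab.le)), max_eq_left (le_of_lt hz)]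
  have hπgt : ∀ z, b < z → π z = b := by
    intro z hz
    rw [hπdef]; simp only
    rw [min_eq_left (le_of_lt hz), max_eq_right hab.le]
  have hπlip : ∀ z z' : ℝ, |π z - π z'| ≤ |z - z'| := by
    intro z z'
    calc |π z - π z'| ≤ max |a - a| |min b z - min b z'| :=
          abs_max_sub_max_le_max a (min b z) a (min b z')
      _ = |min b z - min b z'| := by simp
      _ ≤ max |b - b| |z - z'| := abs_min_sub_min_le_max b z b z'
      _ = |z - z'| := by simp
  -- the global derivative candidate
  set φ : ℝ → ℝ := fun z => φ₀ (π z) with hφdef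
  have hLφ : LipschitzWith (Real.toNNReal L) φ := by
    apply LipschitzWith.of_dist_le_mul
    intro z z'
    rw [Real.dist_eq, Real.dist_eq, Real.coe_toNNReal L hL0]
    calc |φ z - φ z'| ≤ L * |π z - π z'| := hφ₀lip _ (hπIcc z) _ (hπIcc z')
      _ ≤ L * |z - z'| := mul_le_mul_of_nonneg_left (hπlip z z') hL0
  -- the global extension f of G
  set f : ℝ → ℝ := fun z => if z < a then G a + φ₀ a * (z - a)
    else if z ≤ b then G z else G b + φ₀ b * (z - b) with hfdef
  have hfIcc : ∀ z ∈ Set.Icc a b, f z = G z := by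
    intro z hz
    rw [hfdef]
    simp only
    rw [if_neg (not_lt.2 hz.1), if_pos hz.2]
  have hG_dwa : ∀ z ∈ Set.Icc a b, HasDerivWithinAt G (φ₀ z) (Set.Icc a b) z :=
    fun z hz => ((hGC2.differentiableOn (by norm_num)) z hz).hasDerivWithinAt
  have haff : ∀ (c d e w : ℝ), HasDerivAt (fun u => c + d * (u - e)) d w := by
    intro c d e w
    have h1 : HasDerivAt (fun u : ℝ => u - e) 1 w := (hasDerivAt_id w).sub_const e
    have h2' := h1.const_mul d
    rw [mul_one] at h2'
    exact h2'.const_add c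
  have hd : ∀ z, HasDerivAt f (φ z) z := by
    intro z
    rcases lt_trichotomy z a with hza | hza | hza
    · -- z < a : f is affine near z
      have hφz : φ z = φ₀ a := by rw [hφdef]; simp only; rw [hπlt z hza]
      rw [hφz]
      refine (haff (G a) (φ₀ a) a z).congr_of_eventuallyEq ?_
      apply Filter.eventuallyEq_of_mem (Iio_mem_nhds hza)
      intro u hu
      rw [hfdef]; simp only; rw [if_pos (show u < a from hu)]
    · -- z = a : glue
      subst hza
      have hφz : φ z = φ₀ z := by rw [hφdef]; simp only; rw [hπid z ⟨le_refl _, hab.le⟩]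
      rw [hφz]
      have hIccmem : Set.Icc z b ∈ 𝓝[≥] z := Icc_mem_nhdsGE_of_mem ⟨le_refl z, hab⟩
      have hright : HasDerivWithinAt f (φ₀ z) (Set.Ici z) z := by
        refine (((hG_dwa z ⟨le_refl z, hab.le⟩).mono_of_mem_nhdsWithin
          hIccmem)).congr_of_eventuallyEq ?_ (hfIcc z ⟨le_refl z, hab.le⟩)
        exact Filter.eventuallyEq_of_mem hIccmem (fun u hu => hfIcc u hu)
      have hleft : HasDerivWithinAt f (φ₀ z) (Set.Iic z) z := by
        refine ((haff (G z) (φ₀ z) z z).hasDerivWithinAt).congr_of_eventuallyEq ?_ ?_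
        · apply Filter.eventuallyEq_of_mem self_mem_nhdsWithin
          intro u hu
          rcases lt_or_eq_of_le (show u ≤ z from hu) with h | h
          · rw [hfdef]; simp only; rw [if_pos h]
          · subst h
            rw [hfIcc u ⟨le_refl _, hab.le⟩]; simp
        · rw [hfIcc z ⟨le_refl _, hab.le⟩]; simp
      have hunion := hleft.union hright
      rw [Set.Iic_union_Ici, hasDerivWithinAt_univ] at hunion
      exact hunion
    · rcases lt_trichotomy z b with hzb | hzb | hzb
      · -- a < z < b : interior
        have hzI : z ∈ Set.Icc a b := ⟨hza.le, hzb.le⟩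
        have hφz : φ z = φ₀ z := by rw [hφdef]; simp only; rw [hπid z hzI]
        rw [hφz]
        have hnhds : Set.Icc a b ∈ 𝓝 z := Icc_mem_nhds hza hzb
        have hdiff : DifferentiableAt ℝ G z :=
          ((hGC2.differentiableOn (by norm_num)) z hzI).differentiableAt hnhds
        have hder : HasDerivAt G (φ₀ z) z := by
          have := hdiff.hasDerivAt
          rwa [← derivWithin_of_mem_nhds hnhds] at this
        refine hder.congr_of_eventuallyEq ?_
        apply Filter.eventuallyEq_of_mem hnhds
        intro u hu
        exact hfIcc u hu
      · -- z = b : glue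
        subst hzb
        have hzI : z ∈ Set.Icc a z := ⟨hza.le, le_refl _⟩
        have hφz : φ z = φ₀ z := by rw [hφdef]; simp only; rw [hπid z hzI]
        rw [hφz]
        have hIccmem : Set.Icc a z ∈ 𝓝[≤] z := Icc_mem_nhdsLE_of_mem ⟨hza, le_refl z⟩
        have hleft : HasDerivWithinAt f (φ₀ z) (Set.Iic z) z := by
          refine (((hG_dwa z hzI).mono_of_mem_nhdsWithin
            hIccmem)).congr_of_eventuallyEq ?_ (hfIcc z hzI)
          exact Filter.eventuallyEq_of_mem hIccmem (fun u hu => hfIcc u hu)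
        have hright : HasDerivWithinAt f (φ₀ z) (Set.Ici z) z := by
          refine ((haff (G z) (φ₀ z) z z).hasDerivWithinAt).congr_of_eventuallyEq ?_ ?_
          · apply Filter.eventuallyEq_of_mem self_mem_nhdsWithin
            intro u hu
            rcases lt_or_eq_of_le (show z ≤ u from hu) with h | h
            · rw [hfdef]; simp only
              rw [if_neg (not_lt.2 (le_trans hza.le h.le)), if_neg (not_le.2 h)]
            · rw [← h, hfIcc z hzI]; simp
          · rw [hfIcc z hzI]; simp
        have hunion := hleft.union hright
        rw [Set.Iic_union_Ici, hasDerivWithinAt_univ] at hunion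
        exact hunion
      · -- b < z
        have hφz : φ z = φ₀ b := by rw [hφdef]; simp only; rw [hπgt z hzb]
        rw [hφz]
        refine (haff (G b) (φ₀ b) b z).congr_of_eventuallyEq ?_
        apply Filter.eventuallyEq_of_mem (Ioi_mem_nhds hzb)
        intro u hu
        rw [hfdef]; simp only
        rw [if_neg (not_lt.2 (le_trans hab.le (le_of_lt hu))), if_neg (not_le.2 hu)]
  -- f maps [a,b] into itself and preserves K
  have hmapI : Set.MapsTo f (Set.Icc a b) (Set.Icc a b) := by
    intro z hz
    rw [hfIcc z hz]
    exact hGmap hz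
  have hKinvf : Set.MapsTo f K K := by
    intro z hz
    rw [hfIcc z (hKI hz)]
    exact hGK hz
  -- expansion on K
  have h2 : ∀ x ∈ K, 2 ≤ |φ x| := by
    intro x hx
    have hxI := hKI hx
    have hφx : φ x = φ₀ x := by rw [hφdef]; simp only; rw [hπid x hxI]
    have hder := hexp x hx N (by omega)
    by_cases hdiff : DifferentiableAt ℝ (g₀^[N]) x
    · have heq : φ₀ x = deriv (g₀^[N]) x := by
        rw [hφ₀def, hGdef]
        exact hdiff.derivWithin (hUD x hxI)
      rw [hφx, heq]
      linarith
    · exfalso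
      rw [deriv_zero_of_not_differentiableAt hdiff] at hder
      simp at hder
      linarith
  exact key a b hab f φ hd (Real.toNNReal L) hLφ hmapI K hK hKI hKinvf h2
end

section
/- Let f be a C¹ map on a neighborhood of a submanifold 𝒮 satisfying ‖Df(x)v‖ ≤ B·dist(x,𝒮)^β·‖v‖ for all x in a tubular neighborhood and all tangent vectors v, where β > -1. Then for every x in the tubular neighborhood of radius ρ, dist(f(x), f(𝒮)) ≤ (B/(1+β))·dist(x,𝒮)^{1+β}. -/
/-- Non-flatness upper bound near a critical/singular set: if
`‖Df(y)v‖ ≤ B·dist(y,𝒮)^β·‖v‖` on a tubular neighborhood `U` of `𝒮` with `β > -1`,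
and `x` is joined to `𝒮` by a unit-speed curve `γ : [0,ρ] → U` with
`dist(γ t, 𝒮) = t`, then `dist(f x, f(𝒮)) ≤ (B/(1+β))·dist(x,𝒮)^{1+β}`. -/
theorem dist_image_le_of_deriv_upper_bound
    {E : Type*} [NormedAddCommGroup E] [NormedSpace ℝ E]
    (f : E → E) (𝒮 : Set E) (h𝒮 : 𝒮.Nonempty)
    (B β : ℝ) (hB : 0 < B) (hβ : -1 < β)
    (U : Set E) (h𝒮U : 𝒮 ⊆ U)
    (hf : ∀ y ∈ U, DifferentiableAt ℝ f y)
    (hDf : ∀ y ∈ U, ∀ v : E, ‖fderiv ℝ f y v‖ ≤ B * Metric.infDist y 𝒮 ^ β * ‖v‖)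
    (x : E) (ρ : ℝ) (hρ : 0 < ρ)
    (γ : ℝ → E)
    (hγdiff : ∀ t ∈ Set.Icc (0 : ℝ) ρ, HasDerivAt γ (deriv γ t) t)
    (hγ0 : γ 0 ∈ 𝒮) (hγρ : γ ρ = x)
    (hγU : ∀ t ∈ Set.Icc (0 : ℝ) ρ, γ t ∈ U)
    (hγdist : ∀ t ∈ Set.Icc (0 : ℝ) ρ, Metric.infDist (γ t) 𝒮 = t)
    (hγspeed : ∀ t ∈ Set.Icc (0 : ℝ) ρ, ‖deriv γ t‖ = 1) :
    Metric.infDist (f x) (f '' 𝒮) ≤ (B / (1 + β)) * Metric.infDist x 𝒮 ^ (1 + β) := by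
  have h1β : (0:ℝ) < 1 + β := by linarith
  have h1βne : (1:ℝ) + β ≠ 0 := ne_of_gt h1β
  set g : ℝ → E := fun t => f (γ t) with hg
  set φ : ℝ → ℝ := fun t => B / (1 + β) * t ^ (1 + β) with hφ
  have hxdist : Metric.infDist x 𝒮 = ρ := by
    have := hγdist ρ ⟨le_of_lt hρ, le_refl ρ⟩
    rwa [hγρ] at this
  -- derivative of g on [0,ρ]
  have hgderiv : ∀ t ∈ Set.Icc (0:ℝ) ρ,
      HasDerivAt g (fderiv ℝ f (γ t) (deriv γ t)) t := fun t ht =>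
    ((hf (γ t) (hγU t ht)).hasFDerivAt.comp_hasDerivAt t (hγdiff t ht))
  have hbound : ∀ t ∈ Set.Icc (0:ℝ) ρ,
      ‖fderiv ℝ f (γ t) (deriv γ t)‖ ≤ B * t ^ β := by
    intro t ht
    have := hDf (γ t) (hγU t ht) (deriv γ t)
    rwa [hγdist t ht, hγspeed t ht, mul_one] at this
  -- main estimate on [ε, ρ]
  have key : ∀ ε : ℝ, 0 < ε → ε ≤ ρ → ‖g ρ - g ε‖ ≤ φ ρ - φ ε := by
    intro ε hε hερ
    have hsub : Set.Icc ε ρ ⊆ Set.Icc 0 ρ :=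
      Set.Icc_subset_Icc (le_of_lt hε) le_rfl
    have hIco : Set.Ico ε ρ ⊆ Set.Icc 0 ρ :=
      fun t ht => hsub ⟨ht.1, le_of_lt ht.2⟩
    have hmain : ∀ ⦃t⦄, t ∈ Set.Icc ε ρ → ‖g t - g ε‖ ≤ φ t - φ ε := by
      apply image_norm_le_of_norm_deriv_right_le_deriv_boundary'
        (f := fun t => g t - g ε) (f' := fun t => fderiv ℝ f (γ t) (deriv γ t))
        (B := fun t => φ t - φ ε) (B' := fun t => B * t ^ β)
      · intro t ht
        exact ((hgderiv t (hsub ht)).continuousAt.continuousWithinAt).sub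
          continuousWithinAt_const
      · intro t ht
        exact ((hgderiv t (hIco ht)).sub_const _).hasDerivWithinAt
      · simp
      · intro t ht
        have htpos : 0 < t := lt_of_lt_of_le hε ht.1
        exact (((Real.continuousAt_rpow_const t (1+β)
          (Or.inl (ne_of_gt htpos))).const_smul (B/(1+β))).sub
          continuousAt_const).continuousWithinAt
      · intro t ht
        have htpos : 0 < t := lt_of_lt_of_le hε ht.1
        have h := (Real.hasDerivAt_rpow_const (x := t) (p := 1+β)
          (Or.inl (ne_of_gt htpos))).const_mul (B/(1+β))
        have heq : B / (1 + β) * ((1 + β) * t ^ (1 + β - 1)) = B * t ^ β := by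
          have : (1:ℝ) + β - 1 = β := by ring
          rw [this]; field_simp
        rw [heq] at h
        exact (h.sub_const _).hasDerivWithinAt
      · intro t ht
        exact hbound t (hIco ht)
    exact hmain ⟨hερ, le_rfl⟩
  -- take ε → 0⁺
  have hcontg0 : ContinuousAt g 0 := by
    exact (hf (γ 0) (h𝒮U hγ0)).continuousAt.comp
      (hγdiff 0 ⟨le_rfl, le_of_lt hρ⟩).continuousAt
  have hφ0 : φ 0 = 0 := by
    simp [hφ, Real.zero_rpow h1βne]
  have htend1 : Filter.Tendsto (fun ε => ‖g ρ - g ε‖) (nhdsWithin 0 (Set.Ioi 0))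
      (nhds ‖g ρ - g 0‖) :=
    ((Filter.Tendsto.sub tendsto_const_nhds hcontg0.tendsto).norm).mono_left
      nhdsWithin_le_nhds
  have hφcont : Filter.Tendsto φ (nhds 0) (nhds (φ 0)) := by
    have := (Real.continuousAt_rpow_const 0 (1+β) (Or.inr h1β.le)).const_smul (B/(1+β))
    exact this.tendsto
  have htend2 : Filter.Tendsto (fun ε => φ ρ - φ ε) (nhdsWithin 0 (Set.Ioi 0))
      (nhds (φ ρ - φ 0)) :=
    (Filter.Tendsto.sub tendsto_const_nhds hφcont).mono_left nhdsWithin_le_nhds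
  have hfinal : ‖g ρ - g 0‖ ≤ φ ρ - φ 0 := by
    refine le_of_tendsto_of_tendsto htend1 htend2 ?_
    have hmem : Set.Ioc (0:ℝ) ρ ∈ nhdsWithin 0 (Set.Ioi 0) :=
      Ioc_mem_nhdsGT_of_mem ⟨le_rfl, hρ⟩
    filter_upwards [hmem] with ε hε
    exact key ε hε.1 hε.2
  rw [hφ0, sub_zero] at hfinal
  have h1 : Metric.infDist (f x) (f '' 𝒮) ≤ dist (f x) (f (γ 0)) :=
    Metric.infDist_le_dist_of_mem ⟨γ 0, hγ0, rfl⟩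
  have h2 : dist (f x) (f (γ 0)) = ‖g ρ - g 0‖ := by
    rw [dist_eq_norm]; simp [hg, hγρ]
  rw [hxdist]
  calc Metric.infDist (f x) (f '' 𝒮) ≤ ‖g ρ - g 0‖ := by rw [← h2] at hfinal ⊢; exact h1
    _ ≤ φ ρ := hfinal
end
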